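/- Contraction of the mean-field update map: suppose sup_{ψ ∈ [0,1]^V} |F̃(ψ)| < 1/|V|. Then the map T(ψ) = σ(∇F̃(ψ)) (sigmoid applied coordinate-wise to the gradient of the multilinear extension) satisfies ‖T(x) − T(y)‖₂ < ‖x − y‖₂ for all distinct x, y ∈ [0,1]^V, i.e., the Frobenius norm of its Jacobian is strictly less than 1 on [0,1]^V. -/

import Mathlib

open Real Finset

noncomputable def mlext {n : ℕ} (F : Finset (Fin n) → ℝ) (ψ : Fin n → ℝ) : ℝ :=
  ∑ S : Finset (Fin n), F S * ((∏ j ∈ S, ψ j) * ∏ j ∈ Sᶜ, (1 - ψ j))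

noncomputable def pd {n : ℕ} (i : Fin n) (f : (Fin n → ℝ) → ℝ) (ψ : Fin n → ℝ) : ℝ :=
  deriv (fun t => f (Function.update ψ i t)) (ψ i)

noncomputable def sigmoid (x : ℝ) : ℝ := (1 + Real.exp (-x))⁻¹

/-
Write `M` for the supremum of `|F̃|` on the cube. Since `F̃` is affine in each coordinate,
`∂ᵢF̃(ψ) = F̃(ψ with ψᵢ = 1) - F̃(ψ with ψᵢ = 0)`; this is again affine in each coordinate and
bounded by `2M` on the cube, so changing one coordinate at a time gives
`|∂ᵢF̃(x) - ∂ᵢF̃(y)| ≤ 4M ‖x - y‖₁`. As the sigmoid is `1/4`-Lipschitz, every coordinate of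
`T x - T y` is at most `M ‖x - y‖₁ ≤ M √n ‖x - y‖₂`, hence `‖T x - T y‖₂ ≤ n M ‖x - y‖₂`, and
`n M < 1`.
-/

open Function

def IsMultiaffine {ι : Type*} [DecidableEq ι] (f : (ι → ℝ) → ℝ) : Prop :=
  ∀ ψ i t, f (update ψ i t) = (1 - t) * f (update ψ i 0) + t * f (update ψ i 1)

theorem abs_sub_le_sum_of_abs_update_sub_le {ι : Type*} [Fintype ι] [DecidableEq ι]
    {s : Set ℝ} {f : (ι → ℝ) → ℝ} {L : ℝ}
    (hf : ∀ ψ, (∀ k, ψ k ∈ s) → ∀ k, ∀ t ∈ s, |f (update ψ k t) - f ψ| ≤ L * |t - ψ k|)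
    {x y : ι → ℝ} (hx : ∀ k, x k ∈ s) (hy : ∀ k, y k ∈ s) :
    |f x - f y| ≤ L * ∑ k, |x k - y k| := by
  suffices h : ∀ D : Finset ι, ∀ x : ι → ℝ, (∀ k, x k ∈ s) → (∀ k ∉ D, x k = y k) →
      |f x - f y| ≤ L * ∑ k ∈ D, |x k - y k| from
    h univ x hx fun k hk => absurd (mem_univ k) hk
  intro D
  induction D using Finset.induction_on with
  | empty =>
    intro x _ hxy
    simp [funext fun k => hxy k (notMem_empty k)]
  | @insert a D ha ih =>
    intro x hx hxy
    set x' := update x a (y a) with hx'_def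
    have hx' : ∀ k, x' k ∈ s := (forall_update_iff x (p := fun _ z => z ∈ s)).2
      ⟨hy a, fun k _ => hx k⟩
    have hx'y : ∀ k ∉ D, x' k = y k := by
      intro k hk
      rcases eq_or_ne k a with rfl | hka
      · exact update_self ..
      · rw [hx'_def, update_of_ne hka]
        exact hxy k (by simp [hk, hka])
    have hsum : ∑ k ∈ D, |x' k - y k| = ∑ k ∈ D, |x k - y k| :=
      sum_congr rfl fun k hk => by rw [hx'_def, update_of_ne (ne_of_mem_of_not_mem hk ha)]
    calc |f x - f y| ≤ |f x - f x'| + |f x' - f y| := abs_sub_le ..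
      _ ≤ L * |y a - x a| + L * ∑ k ∈ D, |x k - y k| :=
          add_le_add ((abs_sub_comm ..).trans_le (hf x hx a (y a) (hy a)))
            (hsum ▸ ih x' hx' hx'y)
      _ = L * ∑ k ∈ insert a D, |x k - y k| := by
          rw [sum_insert ha, abs_sub_comm]
          ring

theorem abs_update_one_sub_update_zero_le {ι : Type*} [DecidableEq ι] {f : (ι → ℝ) → ℝ} {B : ℝ}
    (hB : ∀ ψ, (∀ k, ψ k ∈ Set.Icc (0 : ℝ) 1) → |f ψ| ≤ B)
    {ψ : ι → ℝ} (hψ : ∀ k, ψ k ∈ Set.Icc (0 : ℝ) 1) (k : ι) :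
    |f (update ψ k 1) - f (update ψ k 0)| ≤ 2 * B := by
  have hend : ∀ c ∈ Set.Icc (0 : ℝ) 1, |f (update ψ k c)| ≤ B := fun c hc =>
    hB _ ((forall_update_iff ψ (p := fun _ z => z ∈ Set.Icc (0 : ℝ) 1)).2 ⟨hc, fun j _ => hψ j⟩)
  linarith [abs_sub (f (update ψ k 1)) (f (update ψ k 0)), hend 1 (by simp), hend 0 (by simp)]

namespace IsMultiaffine

variable {ι : Type*} [DecidableEq ι] {f g : (ι → ℝ) → ℝ}

theorem sub (hf : IsMultiaffine f) (hg : IsMultiaffine g) : IsMultiaffine (f - g) := by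
  intro ψ i t
  simp only [Pi.sub_apply, hf ψ i t, hg ψ i t]
  ring

theorem const_mul (hf : IsMultiaffine f) (c : ℝ) : IsMultiaffine fun ψ => c * f ψ := by
  intro ψ i t
  simp only [hf ψ i t]
  ring

theorem sum {κ : Type*} {s : Finset κ} {f : κ → (ι → ℝ) → ℝ}
    (hf : ∀ S ∈ s, IsMultiaffine (f S)) : IsMultiaffine fun ψ => ∑ S ∈ s, f S ψ := by
  intro ψ i t
  dsimp only
  rw [sum_congr rfl fun S hS => hf S hS ψ i t, sum_add_distrib, mul_sum, mul_sum]

theorem prod_apply [Fintype ι] {ℓ : ι → ℝ → ℝ}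
    (hℓ : ∀ j t, ℓ j t = (1 - t) * ℓ j 0 + t * ℓ j 1) :
    IsMultiaffine fun ψ => ∏ j, ℓ j (ψ j) := by
  intro ψ i t
  simp only [apply_update (fun j => ℓ j), prod_update_of_mem (mem_univ i)]
  rw [hℓ i t]
  ring

theorem comp_update (hf : IsMultiaffine f) (i : ι) (c : ℝ) :
    IsMultiaffine fun ψ => f (update ψ i c) := by
  intro ψ k t
  rcases eq_or_ne k i with rfl | hki
  · simp only [update_idem]
    ring
  · simp only [update_comm hki _ c ψ]
    exact hf _ k t

theorem update_sub_update (hf : IsMultiaffine f) (ψ : ι → ℝ) (k : ι) (a b : ℝ) :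
    f (update ψ k b) - f (update ψ k a) = (b - a) * (f (update ψ k 1) - f (update ψ k 0)) := by
  rw [hf ψ k a, hf ψ k b]
  ring

theorem hasDerivAt_update (hf : IsMultiaffine f) (ψ : ι → ℝ) (i : ι) (t : ℝ) :
    HasDerivAt (fun s => f (update ψ i s)) (f (update ψ i 1) - f (update ψ i 0)) t := by
  have hline : (fun s => f (update ψ i s))
      = fun s => f (update ψ i 0) + s * (f (update ψ i 1) - f (update ψ i 0)) := by
    funext s
    rw [hf ψ i s]
    ring
  rw [hline]
  simpa using ((hasDerivAt_id t).mul_const (f (update ψ i 1) - f (update ψ i 0))).const_add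
    (f (update ψ i 0))

theorem abs_update_sub_le (hf : IsMultiaffine f) {B : ℝ}
    (hB : ∀ ψ, (∀ k, ψ k ∈ Set.Icc (0 : ℝ) 1) → |f ψ| ≤ B)
    {ψ : ι → ℝ} (hψ : ∀ k, ψ k ∈ Set.Icc (0 : ℝ) 1) (k : ι) (t : ℝ) :
    |f (update ψ k t) - f ψ| ≤ 2 * B * |t - ψ k| := by
  calc |f (update ψ k t) - f ψ|
      = |t - ψ k| * |f (update ψ k 1) - f (update ψ k 0)| := by
        have h := hf.update_sub_update ψ k (ψ k) t
        rw [update_eq_self] at h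
        rw [h, abs_mul]
    _ ≤ |t - ψ k| * (2 * B) := by gcongr; exact abs_update_one_sub_update_zero_le hB hψ k
    _ = 2 * B * |t - ψ k| := mul_comm ..

theorem abs_sub_le [Fintype ι] (hf : IsMultiaffine f) {B : ℝ}
    (hB : ∀ ψ, (∀ k, ψ k ∈ Set.Icc (0 : ℝ) 1) → |f ψ| ≤ B)
    {x y : ι → ℝ} (hx : ∀ k, x k ∈ Set.Icc (0 : ℝ) 1) (hy : ∀ k, y k ∈ Set.Icc (0 : ℝ) 1) :
    |f x - f y| ≤ 2 * B * ∑ k, |x k - y k| :=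
  abs_sub_le_sum_of_abs_update_sub_le (fun _ hψ k t _ => hf.abs_update_sub_le hB hψ k t) hx hy

end IsMultiaffine

theorem IsMultiaffine.pd_eq {n : ℕ} {f : (Fin n → ℝ) → ℝ} (hf : IsMultiaffine f) (i : Fin n)
    (ψ : Fin n → ℝ) : pd i f ψ = f (update ψ i 1) - f (update ψ i 0) :=
  (hf.hasDerivAt_update ψ i (ψ i)).deriv

theorem IsMultiaffine.abs_pd_sub_le {n : ℕ} {f : (Fin n → ℝ) → ℝ} (hf : IsMultiaffine f) {B : ℝ}
    (hB : ∀ ψ, (∀ k, ψ k ∈ Set.Icc (0 : ℝ) 1) → |f ψ| ≤ B)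
    {x y : Fin n → ℝ} (hx : ∀ k, x k ∈ Set.Icc (0 : ℝ) 1) (hy : ∀ k, y k ∈ Set.Icc (0 : ℝ) 1)
    (i : Fin n) : |pd i f x - pd i f y| ≤ 4 * B * ∑ k, |x k - y k| := by
  have hdiff : IsMultiaffine fun ψ => f (update ψ i 1) - f (update ψ i 0) :=
    (hf.comp_update i 1).sub (hf.comp_update i 0)
  rw [hf.pd_eq, hf.pd_eq]
  convert hdiff.abs_sub_le (fun ψ hψ => abs_update_one_sub_update_zero_le hB hψ i) hx hy using 2
  ring

theorem mlext_eq_sum_prod {n : ℕ} (F : Finset (Fin n) → ℝ) :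
    mlext F = fun ψ => ∑ S, F S * ∏ j, if j ∈ S then ψ j else 1 - ψ j := by
  funext ψ
  refine sum_congr rfl fun S _ => ?_
  rw [prod_ite]
  congr 3 <;> ext <;> simp

theorem mlext_isMultiaffine {n : ℕ} (F : Finset (Fin n) → ℝ) : IsMultiaffine (mlext F) := by
  rw [mlext_eq_sum_prod]
  exact IsMultiaffine.sum fun S _ =>
    (IsMultiaffine.prod_apply (ℓ := fun j t => if j ∈ S then t else 1 - t)
      fun j t => by split_ifs <;> ring).const_mul (F S)

theorem abs_mlext_le {n : ℕ} (F : Finset (Fin n) → ℝ) {φ : Fin n → ℝ}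
    (hφ : ∀ k, φ k ∈ Set.Icc (0 : ℝ) 1) : |mlext F φ| ≤ ∑ S, |F S| := by
  have hweight : ∀ S : Finset (Fin n), |∏ j, if j ∈ S then φ j else 1 - φ j| ≤ 1 := fun S => by
    rw [abs_prod]
    refine prod_le_one (fun _ _ => abs_nonneg _) fun j _ => ?_
    obtain ⟨h0, h1⟩ := hφ j
    split_ifs <;> rw [abs_le] <;> constructor <;> linarith
  rw [mlext_eq_sum_prod]
  refine (abs_sum_le_sum_abs _ _).trans (sum_le_sum fun S _ => ?_)
  rw [abs_mul]
  exact mul_le_of_le_one_right (abs_nonneg _) (hweight S)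

theorem abs_mlext_le_sSup {n : ℕ} (F : Finset (Fin n) → ℝ) {φ : Fin n → ℝ}
    (hφ : ∀ k, φ k ∈ Set.Icc (0 : ℝ) 1) :
    |mlext F φ| ≤ sSup ((fun φ => |mlext F φ|) '' {φ : Fin n → ℝ | ∀ k, φ k ∈ Set.Icc (0:ℝ) 1}) :=
  le_csSup ⟨∑ S, |F S|, by rintro _ ⟨ψ, hψ, rfl⟩; exact abs_mlext_le F hψ⟩ ⟨φ, hφ, rfl⟩

theorem Real.lipschitzWith_sigmoid : LipschitzWith 4⁻¹ Real.sigmoid := by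
  refine lipschitzWith_of_nnnorm_deriv_le differentiable_sigmoid fun x => ?_
  rw [← NNReal.coe_le_coe, coe_nnnorm, deriv_sigmoid, Real.norm_eq_abs,
    abs_of_nonneg (mul_nonneg (sigmoid_nonneg x) (sub_nonneg.2 (sigmoid_le_one x)))]
  norm_num
  nlinarith [sq_nonneg (Real.sigmoid x - 2⁻¹)]

theorem sqrt_sum_sq_le_of_abs_le_mul_sum_abs {ι : Type*} [Fintype ι] {a b : ι → ℝ} {c : ℝ}
    (hc : 0 ≤ c) (h : ∀ i, |a i| ≤ c * ∑ k, |b k|) :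
    √(∑ i, a i ^ 2) ≤ (Fintype.card ι : ℝ) * c * √(∑ k, b k ^ 2) := by
  set N := (Fintype.card ι : ℝ)
  have hcs : (∑ k, |b k|) ^ 2 ≤ N * ∑ k, b k ^ 2 := by
    simpa [sq_abs] using sq_sum_le_card_mul_sum_sq (s := univ) (f := fun k => |b k|)
  have hsq : ∑ i, a i ^ 2 ≤ (N * c) ^ 2 * ∑ k, b k ^ 2 :=
    calc ∑ i, a i ^ 2 ≤ ∑ _i : ι, (c * ∑ k, |b k|) ^ 2 :=
          sum_le_sum fun i _ => by rw [← sq_abs]; gcongr; exact h i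
      _ = N * c ^ 2 * (∑ k, |b k|) ^ 2 := by simp [N]; ring
      _ ≤ N * c ^ 2 * (N * ∑ k, b k ^ 2) := by gcongr
      _ = (N * c) ^ 2 * ∑ k, b k ^ 2 := by ring
  calc √(∑ i, a i ^ 2) ≤ √((N * c) ^ 2 * ∑ k, b k ^ 2) := sqrt_le_sqrt hsq
    _ = N * c * √(∑ k, b k ^ 2) := by rw [sqrt_mul (sq_nonneg _), sqrt_sq (by positivity)]

theorem mean_field_update_contraction_general {n : ℕ} (F : Finset (Fin n) → ℝ)
    (hsup : sSup ((fun φ => |mlext F φ|) '' {φ : Fin n → ℝ | ∀ k, φ k ∈ Set.Icc (0:ℝ) 1})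
      < 1 / n) :
    ∀ x y : Fin n → ℝ, (∀ k, x k ∈ Set.Icc (0:ℝ) 1) → (∀ k, y k ∈ Set.Icc (0:ℝ) 1) →
      x ≠ y →
      Real.sqrt (∑ i, (_root_.sigmoid (pd i (mlext F) x) - _root_.sigmoid (pd i (mlext F) y)) ^ 2)
        < Real.sqrt (∑ i, (x i - y i) ^ 2) := by
  intro x y hx hy hxy
  set M := sSup ((fun φ => |mlext F φ|) '' {φ : Fin n → ℝ | ∀ k, φ k ∈ Set.Icc (0:ℝ) 1})
  obtain ⟨k, hk⟩ := Function.ne_iff.mp hxy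
  have hM : ∀ φ : Fin n → ℝ, (∀ k, φ k ∈ Set.Icc (0:ℝ) 1) → |mlext F φ| ≤ M :=
    fun φ hφ => abs_mlext_le_sSup F hφ
  have hM0 : 0 ≤ M := (abs_nonneg _).trans (hM 0 fun _ => by simp)
  have hnM : (n : ℝ) * M < 1 := by
    rwa [lt_div_iff₀ (by exact_mod_cast k.pos), mul_comm] at hsup
  have hstep : ∀ i, |_root_.sigmoid (pd i (mlext F) x) - _root_.sigmoid (pd i (mlext F) y)|
      ≤ M * ∑ k, |x k - y k| := fun i =>
    calc _ ≤ 4⁻¹ * |pd i (mlext F) x - pd i (mlext F) y| := by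
          -- `_root_.sigmoid` and `Real.sigmoid` are the same function by definition
          have h := Real.lipschitzWith_sigmoid.dist_le_mul (pd i (mlext F) x) (pd i (mlext F) y)
          rwa [Real.dist_eq, Real.dist_eq] at h
      _ ≤ 4⁻¹ * (4 * M * ∑ k, |x k - y k|) := by
          gcongr
          exact (mlext_isMultiaffine F).abs_pd_sub_le hM hx hy i
      _ = M * ∑ k, |x k - y k| := by ring
  have hpos : 0 < √(∑ i, (x i - y i) ^ 2) := by
    have : x k - y k ≠ 0 := sub_ne_zero.2 hk
    exact sqrt_pos.2 (sum_pos' (fun i _ => sq_nonneg _) ⟨k, mem_univ k, by positivity⟩)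
  calc _ ≤ n * M * √(∑ i, (x i - y i) ^ 2) := by
        simpa using sqrt_sum_sq_le_of_abs_le_mul_sum_abs hM0 hstep
    _ < √(∑ i, (x i - y i) ^ 2) := mul_lt_of_lt_one_left hpos hnM

theorem mean_field_update_contraction {n : ℕ} (hn : 1 ≤ n) (F : Finset (Fin n) → ℝ)
    (hsup : sSup ((fun φ => |mlext F φ|) '' {φ : Fin n → ℝ | ∀ k, φ k ∈ Set.Icc (0:ℝ) 1})
      < 1 / n) :
    ∀ x y : Fin n → ℝ, (∀ k, x k ∈ Set.Icc (0:ℝ) 1) → (∀ k, y k ∈ Set.Icc (0:ℝ) 1) →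
      x ≠ y →
      Real.sqrt (∑ i, (_root_.sigmoid (pd i (mlext F) x) - _root_.sigmoid (pd i (mlext F) y)) ^ 2)
        < Real.sqrt (∑ i, (x i - y i) ^ 2) :=
  mean_field_update_contraction_general F hsup
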